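/- Let d ≥ 3, let P be the polynomial on ℝ^d given by P(x₁,…,x_d) = x₁² − x₂² − ⋯ − x_d², and let N = (1/√2)·(1,1,0,…,0) ∈ S^{d−1}. Then there exists c ∈ ℂ \ {0} such that the polynomial η ↦ c·(η₁ − η₂) belongs to L_N(P); in particular L_N(P) contains a non-constant element. -/

import Mathlib

/-!
Since `w = e₁ + e₂` is a null vector of the Lorentz form `P`, the shifts of `P` along `w` are
affine in the shift parameter: `P_{tw}(η) = P(η) + 2t(η₁ - η₂)`. Measuring polynomials by `Q̃(0)`,
i.e. by the `ℓ²` norm of their derivatives at the origin, the normalized polynomials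
`(P + tL) / ‖P + tL‖` of an affine family tend to `L / ‖L‖` as `t → ∞`.
-/

open MvPolynomial Filter Topology RealInnerProductSpace

noncomputable section

/-- Evaluation of a complex-coefficient polynomial at a real point of `ℝ^d`. -/
def evalP {d : ℕ} (P : MvPolynomial (Fin d) ℂ) (x : EuclideanSpace ℝ (Fin d)) : ℂ :=
  MvPolynomial.eval (fun i => (x i : ℂ)) P

/-- The shifted polynomial `P_ξ(η) = P(η + ξ)`. -/
def shiftP {d : ℕ} (P : MvPolynomial (Fin d) ℂ) (ξ : EuclideanSpace ℝ (Fin d)) :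
    MvPolynomial (Fin d) ℂ :=
  MvPolynomial.aeval (fun i => MvPolynomial.X i + MvPolynomial.C ((ξ i : ℂ))) P

/-- `Q̃(0) = sqrt (∑_α |Q^{(α)}(0)|²)`, using `Q^{(α)}(0) = α! ⬝ coeff α Q`. -/
def tildeZero {d : ℕ} (Q : MvPolynomial (Fin d) ℂ) : ℝ :=
  Real.sqrt (∑ α ∈ Q.support,
    ((∏ i, Nat.factorial (α i) : ℝ) * ‖MvPolynomial.coeff α Q‖) ^ 2)

/-- The normalized shifted polynomial `P_ξ / P̃_ξ(0)`. -/
def normShift {d : ℕ} (P : MvPolynomial (Fin d) ℂ) (ξ : EuclideanSpace ℝ (Fin d)) :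
    MvPolynomial (Fin d) ℂ :=
  ((tildeZero (shiftP P ξ) : ℂ))⁻¹ • shiftP P ξ

/-- `L(P)`: localizations of `P` at infinity (limits taken in the norm `Q ↦ Q̃(0)`). -/
def Lset {d : ℕ} (P : MvPolynomial (Fin d) ℂ) : Set (MvPolynomial (Fin d) ℂ) :=
  {Q | ∃ ξ : ℕ → EuclideanSpace ℝ (Fin d),
    Tendsto (fun n => ‖ξ n‖) atTop atTop ∧
    Tendsto (fun n => tildeZero (normShift P (ξ n) - Q)) atTop (nhds 0)}

/-- `L_N(P)`: localizations of `P` at infinity in direction `N`. -/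
def LNset {d : ℕ} (P : MvPolynomial (Fin d) ℂ) (N : EuclideanSpace ℝ (Fin d)) :
    Set (MvPolynomial (Fin d) ℂ) :=
  {Q | ∃ ξ : ℕ → EuclideanSpace ℝ (Fin d),
    Tendsto (fun n => ‖ξ n‖) atTop atTop ∧
    Tendsto (fun n => ‖ξ n‖⁻¹ • ξ n) atTop (nhds N) ∧
    Tendsto (fun n => tildeZero (normShift P (ξ n) - Q)) atTop (nhds 0)}

/-- `P̃_V(ξ,t) = sup {|P(ξ+η)| : η ∈ V, |η| ≤ t}`. -/
def tildeSupV {d : ℕ} (P : MvPolynomial (Fin d) ℂ)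
    (V : Submodule ℝ (EuclideanSpace ℝ (Fin d)))
    (ξ : EuclideanSpace ℝ (Fin d)) (t : ℝ) : ℝ :=
  sSup ((fun η => ‖evalP P (ξ + η)‖) '' {η | η ∈ V ∧ ‖η‖ ≤ t})

/-- `P̃(ξ,t) = P̃_{ℝ^d}(ξ,t)`. -/
def tildeSup {d : ℕ} (P : MvPolynomial (Fin d) ℂ)
    (ξ : EuclideanSpace ℝ (Fin d)) (t : ℝ) : ℝ :=
  tildeSupV P ⊤ ξ t

/-- The filter `|ξ| → ∞` on `ℝ^d`. -/
def toInfty (d : ℕ) : Filter (EuclideanSpace ℝ (Fin d)) :=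
  Filter.comap (fun ξ => ‖ξ‖) Filter.atTop

/-- `σ_P(V) = inf_{t ≥ 1} liminf_{|ξ|→∞} P̃_V(ξ,t) / P̃(ξ,t)`. -/
def sigmaP {d : ℕ} (P : MvPolynomial (Fin d) ℂ)
    (V : Submodule ℝ (EuclideanSpace ℝ (Fin d))) : ℝ :=
  sInf {r | ∃ t : ℝ, 1 ≤ t ∧
    r = Filter.liminf (fun ξ => tildeSupV P V ξ t / tildeSup P ξ t) (toInfty d)}

/-- `σ_P(y) = σ_P(span {y})`. -/
def sigmaPt {d : ℕ} (P : MvPolynomial (Fin d) ℂ) (y : EuclideanSpace ℝ (Fin d)) : ℝ :=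
  sigmaP P (Submodule.span ℝ {y})

/-- The reflected polynomial `P̌(x) = P(-x)`. -/
def checkP {d : ℕ} (P : MvPolynomial (Fin d) ℂ) : MvPolynomial (Fin d) ℂ :=
  MvPolynomial.aeval (fun i => -MvPolynomial.X i) P

/-- `Λ(Q) = {η : Q(ξ + tη) = Q(ξ) for all ξ, t}` as a set. -/
def LambdaSet {d : ℕ} (Q : MvPolynomial (Fin d) ℂ) : Set (EuclideanSpace ℝ (Fin d)) :=
  {η | ∀ (ξ : EuclideanSpace ℝ (Fin d)) (t : ℝ), evalP Q (ξ + t • η) = evalP Q ξ}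

/-- The dual cone `Γ° = {ξ : ⟨y,ξ⟩ ≥ 0 for all y ∈ Γ}`. -/
def dualCone {d : ℕ} (Γ : Set (EuclideanSpace ℝ (Fin d))) : Set (EuclideanSpace ℝ (Fin d)) :=
  {ξ | ∀ y ∈ Γ, 0 ≤ ⟪y, ξ⟫}

open scoped lp

namespace MvPolynomial

variable {d : ℕ}

def derivsAtZero : MvPolynomial (Fin d) ℂ →ₗ[ℂ] ℓ²(Fin d →₀ ℕ, ℂ) where
  toFun Q := ⟨fun α => (∏ i, (α i).factorial : ℂ) * coeff α Q,
    Memℓp.of_exponent_ge (memℓp_zero ((Q.support.finite_toSet).subset fun α hα =>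
      mem_support_iff.mpr (right_ne_zero_of_mul hα))) zero_le⟩
  map_add' Q R := by ext α; simp [mul_add]; rfl
  map_smul' c Q := by ext α; simp; ring

theorem derivsAtZero_apply (Q : MvPolynomial (Fin d) ℂ) (α : Fin d →₀ ℕ) :
    derivsAtZero Q α = (∏ i, (α i).factorial : ℂ) * coeff α Q := rfl

theorem tildeZero_eq_norm_derivsAtZero (Q : MvPolynomial (Fin d) ℂ) :
    tildeZero Q = ‖derivsAtZero Q‖ := by
  rw [lp.norm_eq_tsum_rpow (by norm_num), tsum_eq_sum (s := Q.support), tildeZero,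
    Real.sqrt_eq_rpow]
  · norm_num [derivsAtZero_apply]
  · intro α hα
    simp [derivsAtZero_apply, notMem_support_iff.mp hα]

theorem derivsAtZero_ne_zero {Q : MvPolynomial (Fin d) ℂ} (hQ : Q ≠ 0) :
    derivsAtZero Q ≠ 0 := by
  obtain ⟨α, hα⟩ := ne_zero_iff.mp hQ
  intro h
  have := congrArg (fun v : ℓ²(Fin d →₀ ℕ, ℂ) => v α) h
  simp [derivsAtZero_apply, hα, Finset.prod_eq_zero_iff, Nat.factorial_ne_zero] at this

theorem tildeZero_ne_zero {Q : MvPolynomial (Fin d) ℂ} (hQ : Q ≠ 0) : tildeZero Q ≠ 0 := by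
  rw [tildeZero_eq_norm_derivsAtZero]
  exact norm_ne_zero_iff.mpr (derivsAtZero_ne_zero hQ)

theorem derivsAtZero_ofReal_smul (r : ℝ) (Q : MvPolynomial (Fin d) ℂ) :
    derivsAtZero ((r : ℂ) • Q) = r • derivsAtZero Q :=
  (derivsAtZero.map_smul _ _).trans (Complex.coe_smul r _)

theorem derivsAtZero_inv_tildeZero_smul (Q : MvPolynomial (Fin d) ℂ) :
    derivsAtZero ((tildeZero Q : ℂ)⁻¹ • Q) = NormedSpace.normalize (derivsAtZero Q) := by
  rw [← Complex.ofReal_inv, derivsAtZero_ofReal_smul, tildeZero_eq_norm_derivsAtZero,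
    NormedSpace.normalize]

theorem C_mul_X_sub_X_ne_C {σ R : Type*} [CommRing R] {i j : σ} (hij : i ≠ j) {c : R}
    (hc : c ≠ 0) (a : R) : C c * (X i - X j) ≠ C a := by
  classical
  intro h
  have := congrArg (coeff (Finsupp.single i 1)) h
  simp [coeff_single_X, coeff_C, hij.symm, hc, (Finsupp.single_ne_zero.mpr one_ne_zero).symm]
    at this

end MvPolynomial

theorem NormedSpace.tendsto_normalize_add_smul {E : Type*} [NormedAddCommGroup E]
    [NormedSpace ℝ E] {ι : Type*} {l : Filter ι} {f : ι → ℝ} (hf : Tendsto f l atTop) (a : E)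
    {y : E} (hy : y ≠ 0) : Tendsto (fun i => normalize (a + f i • y)) l (𝓝 (normalize y)) := by
  have hcont : ContinuousAt normalize y :=
    (continuous_norm.continuousAt.inv₀ (norm_ne_zero_iff.mpr hy)).smul continuousAt_id
  have hlim : Tendsto (fun i => (f i)⁻¹ • a + y) l (𝓝 y) := by
    simpa using ((tendsto_inv_atTop_zero.comp hf).smul_const a).add_const y
  refine (hcont.tendsto.comp hlim).congr' ?_
  filter_upwards [hf.eventually_gt_atTop 0] with i hi
  rw [Function.comp_apply, ← normalize_smul_of_pos hi, smul_add, smul_inv_smul₀ hi.ne']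

theorem EuclideanSpace.norm_single_add_single {𝕜 ι : Type*} [RCLike 𝕜] [Fintype ι]
    [DecidableEq ι] {i j : ι} (hij : i ≠ j) (a b : 𝕜) :
    ‖EuclideanSpace.single i a + EuclideanSpace.single j b‖ = √(‖a‖ ^ 2 + ‖b‖ ^ 2) := by
  have h := norm_add_sq_eq_norm_sq_add_norm_sq_of_inner_eq_zero (EuclideanSpace.single i a)
    (EuclideanSpace.single j b) (by rw [EuclideanSpace.inner_single_left]; simp [hij])
  rw [← Real.sqrt_sq (norm_nonneg _), sq, h]
  simp [sq]

theorem mem_LNset_of_shiftP_eq {d : ℕ} {P L : MvPolynomial (Fin d) ℂ} (hL : L ≠ 0)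
    {w : EuclideanSpace ℝ (Fin d)} (hw : w ≠ 0) {f : ℕ → ℝ} (hf : Tendsto f atTop atTop)
    (hshift : ∀ n : ℕ, shiftP P ((n : ℝ) • w) = P + (f n : ℂ) • L) :
    (tildeZero L : ℂ)⁻¹ • L ∈ LNset P (NormedSpace.normalize w) := by
  refine ⟨fun n => (n : ℝ) • w, ?_, ?_, ?_⟩
  · simp only [norm_smul, Real.norm_natCast]
    exact tendsto_natCast_atTop_atTop.atTop_mul_const (norm_pos_iff.mpr hw)
  · refine tendsto_const_nhds.congr' ?_
    filter_upwards [eventually_gt_atTop 0] with n hn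
    exact (NormedSpace.normalize_smul_of_pos (Nat.cast_pos.mpr hn) w).symm
  · have hlim :=
      NormedSpace.tendsto_normalize_add_smul hf (derivsAtZero P) (derivsAtZero_ne_zero hL)
    rw [tendsto_iff_norm_sub_tendsto_zero] at hlim
    refine hlim.congr fun n => ?_
    rw [tildeZero_eq_norm_derivsAtZero, map_sub, normShift, derivsAtZero_inv_tildeZero_smul,
      derivsAtZero_inv_tildeZero_smul, hshift, map_add, derivsAtZero_ofReal_smul]

theorem shiftP_minkowski_smul_null {d : ℕ} (h : 1 < d) (t : ℝ) :
    shiftP (X ⟨0, by omega⟩ ^ 2 - ∑ i ∈ Finset.univ.filter (fun i : Fin d => (i : ℕ) ≠ 0),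
        X i ^ 2) (t • (EuclideanSpace.single ⟨0, by omega⟩ 1 + EuclideanSpace.single ⟨1, h⟩ 1)) =
      (X ⟨0, by omega⟩ ^ 2 - ∑ i ∈ Finset.univ.filter (fun i : Fin d => (i : ℕ) ≠ 0), X i ^ 2) +
        ((2 * t : ℝ) : ℂ) • (X ⟨0, by omega⟩ - X ⟨1, h⟩) := by
  set F := Finset.univ.filter (fun i : Fin d => (i : ℕ) ≠ 0)
  set ξ : EuclideanSpace ℝ (Fin d) :=
    t • (EuclideanSpace.single ⟨0, by omega⟩ 1 + EuclideanSpace.single ⟨1, h⟩ 1)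
  have h1 : (⟨1, h⟩ : Fin d) ∈ F := by simp [F]
  have hξ : ∀ i ∈ F.erase ⟨1, h⟩, ξ i = 0 := by
    intro i hi
    simp only [F, Finset.mem_erase, Finset.mem_filter, Finset.mem_univ, true_and] at hi
    simp [ξ, Fin.ext_iff, hi.1, hi.2]
  simp only [shiftP, map_sub, map_pow, map_sum, aeval_X]
  rw [← F.add_sum_erase _ h1, ← F.add_sum_erase _ h1,
    Finset.sum_congr rfl fun i hi => by rw [hξ i hi, Complex.ofReal_zero, map_zero, add_zero]]
  simp [ξ, Fin.ext_iff, smul_eq_C_mul, map_ofNat]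
  ring

/-- For `d ≥ 3`, `P(x) = x₁² - x₂² - ⋯ - x_d²` and `N = (1/√2)(1,1,0,…,0)`, some nonzero
multiple of `η ↦ η₁ - η₂` belongs to `L_N(P)`; in particular `L_N(P)` contains a
non-constant element. -/
theorem stmt10 (d : ℕ) (hd : 3 ≤ d) :
    let P : MvPolynomial (Fin d) ℂ :=
      MvPolynomial.X (⟨0, by omega⟩ : Fin d) ^ 2 -
        ∑ i ∈ Finset.univ.filter (fun i : Fin d => (i : ℕ) ≠ 0), MvPolynomial.X i ^ 2
    let N : EuclideanSpace ℝ (Fin d) := (Real.sqrt 2)⁻¹ •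
      (EuclideanSpace.single (⟨0, by omega⟩ : Fin d) 1 +
        EuclideanSpace.single (⟨1, by omega⟩ : Fin d) 1)
    (∃ c : ℂ, c ≠ 0 ∧
        MvPolynomial.C c * (MvPolynomial.X (⟨0, by omega⟩ : Fin d) -
          MvPolynomial.X (⟨1, by omega⟩ : Fin d)) ∈ LNset P N) ∧
      ∃ Q ∈ LNset P N, ∀ a : ℂ, Q ≠ MvPolynomial.C a := by
  intro P N
  have h1 : 1 < d := by omega
  have hij : (⟨0, by omega⟩ : Fin d) ≠ ⟨1, h1⟩ := by simp [Fin.ext_iff]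
  set L : MvPolynomial (Fin d) ℂ := X ⟨0, by omega⟩ - X ⟨1, h1⟩
  set w : EuclideanSpace ℝ (Fin d) :=
    EuclideanSpace.single ⟨0, by omega⟩ 1 + EuclideanSpace.single ⟨1, h1⟩ 1
  have hw : ‖w‖ = √2 := by norm_num [w, EuclideanSpace.norm_single_add_single hij]
  have hL : L ≠ 0 := sub_ne_zero.mpr (X_injective.ne hij)
  have hmem : C (tildeZero L : ℂ)⁻¹ * L ∈ LNset P N := by
    rw [← smul_eq_C_mul, show N = NormedSpace.normalize w by rw [NormedSpace.normalize, hw]]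
    exact mem_LNset_of_shiftP_eq hL (norm_ne_zero_iff.mp (by rw [hw]; positivity))
      (tendsto_natCast_atTop_atTop.const_mul_atTop two_pos) (shiftP_minkowski_smul_null h1 ·)
  have hc : (tildeZero L : ℂ)⁻¹ ≠ 0 :=
    inv_ne_zero (Complex.ofReal_ne_zero.mpr (tildeZero_ne_zero hL))
  exact ⟨⟨_, hc, hmem⟩, _, hmem, C_mul_X_sub_X_ne_C hij hc⟩
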